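/- With G, K, L, F, φ, the vectors ξ_{yL}, the left regular representation λ, and the orthogonal projection P onto span{ξ_{yL} : y ∈ K} as in the context, for every s ∈ G one has ‖λ(s)P − Pλ(s)‖ ≤ 2√(|F △ Fs| / |F|) in operator norm, where △ denotes symmetric difference. -/

import Mathlib

open Pointwise
open scoped symmDiff InnerProductSpace ComplexConjugate

private lemma aux_sqrt_sub_sq {a b : ℝ} (ha : 0 ≤ a) (hb : 0 ≤ b) :
    (Real.sqrt a - Real.sqrt b) ^ 2 ≤ |a - b| := by
  rcases le_total b a with h | h
  · rw [abs_of_nonneg (by linarith)]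
    nlinarith [Real.sq_sqrt ha, Real.sq_sqrt hb, Real.sqrt_nonneg a, Real.sqrt_nonneg b,
      Real.sqrt_le_sqrt h]
  · rw [abs_of_nonpos (by linarith)]
    nlinarith [Real.sq_sqrt ha, Real.sq_sqrt hb, Real.sqrt_nonneg a, Real.sqrt_nonneg b,
      Real.sqrt_le_sqrt h]

private lemma aux_card_symmDiff {α : Type*} [DecidableEq α] (K B C : Finset α) :
    |((K ∩ B).card : ℝ) - ((K ∩ C).card : ℝ)| ≤ ((K ∩ (symmDiff B C)).card : ℝ) := by
  have key : ∀ B C : Finset α, ((K ∩ B).card : ℝ) ≤ (K ∩ C).card + (K ∩ (symmDiff B C)).card := by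
    intro B C
    have hsub : K ∩ B ⊆ (K ∩ C) ∪ (K ∩ (symmDiff B C)) := by
      intro x hx
      rw [Finset.mem_inter] at hx
      by_cases hxC : x ∈ C
      · exact Finset.mem_union_left _ (Finset.mem_inter.2 ⟨hx.1, hxC⟩)
      · refine Finset.mem_union_right _ (Finset.mem_inter.2 ⟨hx.1, ?_⟩)
        rw [Finset.mem_symmDiff]
        exact Or.inl ⟨hx.2, hxC⟩
    have := (Finset.card_le_card hsub).trans (Finset.card_union_le _ _)
    exact_mod_cast this
  have h1 := key B C
  have h2 := key C B
  rw [symmDiff_comm] at h2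
  rw [abs_sub_le_iff]
  constructor <;> linarith

private lemma aux_norm_sum_sq {E : Type*} [NormedAddCommGroup E] [InnerProductSpace ℂ E]
    {ι : Type*} [DecidableEq ι] (t : Finset ι) (f : ι → E)
    (h : ∀ i ∈ t, ∀ j ∈ t, i ≠ j → ⟪f i, f j⟫_ℂ = 0) :
    ‖∑ i ∈ t, f i‖ ^ 2 = ∑ i ∈ t, ‖f i‖ ^ 2 := by
  have key : ⟪∑ i ∈ t, f i, ∑ j ∈ t, f j⟫_ℂ = ∑ i ∈ t, ⟪f i, f i⟫_ℂ := by
    rw [sum_inner]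
    refine Finset.sum_congr rfl fun i hi => ?_
    rw [inner_sum]
    exact Finset.sum_eq_single_of_mem i hi fun j hj hji => h i hi j hj (Ne.symm hji)
  calc ‖∑ i ∈ t, f i‖ ^ 2 = RCLike.re ⟪∑ i ∈ t, f i, ∑ j ∈ t, f j⟫_ℂ :=
        (inner_self_eq_norm_sq _).symm
    _ = RCLike.re (∑ i ∈ t, ⟪f i, f i⟫_ℂ) := by rw [key]
    _ = ∑ i ∈ t, RCLike.re ⟪f i, f i⟫_ℂ := map_sum _ _ _
    _ = ∑ i ∈ t, ‖f i‖ ^ 2 := Finset.sum_congr rfl fun i _ => inner_self_eq_norm_sq _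

set_option maxHeartbeats 1000000 in
/-- With a tiling `G = KL`, `F ⊆ K` finite nonempty, `φ(x) = √(|K ∩ Fx|/|F|)`,
`ξ_{yL} = Σ_{x ∈ yL} φ(x) δ_x ∈ ℓ²(G;ℂ)`, `λ` the left regular representation, and
`P` the orthogonal projection onto `span{ξ_{yL} : y ∈ K}` (the sum of the rank-one
projections onto the `ξ_{yL}`), one has `‖[λ(s), P]‖ ≤ 2√(|F ∆ Fs|/|F|)`. -/
theorem norm_commutator_lreg_P_le {G : Type*} [Group G] [Countable G] [DecidableEq G]
    (K : Finset G) (L : Subgroup G) (hL : L.Normal) (hLfi : L.FiniteIndex)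
    (hTile : ∀ g : G, ∃! p : K × L, (p.1 : G) * (p.2 : G) = g)
    (F : Finset G) (hFK : F ⊆ K) (hFne : F.Nonempty)
    (φ : G → ℝ)
    (hφ : ∀ x : G, φ x = Real.sqrt (((K ∩ F.image (· * x)).card : ℝ) / (F.card : ℝ)))
    (ξ : G → lp (fun _ : G => ℂ) 2)
    (hξ : ∀ y : G, (ξ y : ∀ _ : G, ℂ) =
      Set.indicator (y • (L : Set G)) (fun x => (φ x : ℂ)))
    (lam : G → (lp (fun _ : G => ℂ) 2 →L[ℂ] lp (fun _ : G => ℂ) 2))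
    (hlam : ∀ (s : G) (v : lp (fun _ : G => ℂ) 2) (x : G),
      (lam s v : ∀ _ : G, ℂ) x = (v : ∀ _ : G, ℂ) (s⁻¹ * x))
    (P : lp (fun _ : G => ℂ) 2 →L[ℂ] lp (fun _ : G => ℂ) 2)
    (hP : ∀ v, P v = ∑ y ∈ K, ⟪ξ y, v⟫_ℂ • ξ y)
    (s : G) :
    ‖lam s * P - P * lam s‖ ≤
      2 * Real.sqrt (((symmDiff F (F.image (· * s))).card : ℝ) / (F.card : ℝ)) := by
  classical
  -- unique coset representatives in K
  have hrepEU : ∀ g : G, ∃! k : G, k ∈ K ∧ g⁻¹ * k ∈ L := by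
    intro g
    obtain ⟨p, hp, hup⟩ := hTile g
    refine ⟨(p.1 : G), ⟨p.1.2, ?_⟩, ?_⟩
    · have h1 : g⁻¹ * (p.1 : G) = ((p.2 : G))⁻¹ := by rw [← hp]; group
      rw [h1]; exact inv_mem p.2.2
    · rintro k ⟨hkK, hkL⟩
      have h2 : (⟨⟨k, hkK⟩, ⟨(g⁻¹ * k)⁻¹, inv_mem hkL⟩⟩ : K × L) = p := by
        apply hup; simp
      have := congrArg (fun q : K × L => (q.1 : G)) h2
      simpa using this
  choose rep hrep using hrepEU
  have hrepK : ∀ g, rep g ∈ K := fun g => (hrep g).1.1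
  have hrepL : ∀ g, g⁻¹ * rep g ∈ L := fun g => (hrep g).1.2
  have hrepU : ∀ g k, k ∈ K → g⁻¹ * k ∈ L → k = rep g := fun g k hk hl => (hrep g).2 k ⟨hk, hl⟩
  -- pointwise formula for ξ
  have hξx : ∀ y x : G, (ξ y : ∀ _ : G, ℂ) x = if y⁻¹ * x ∈ L then (φ x : ℂ) else 0 := by
    intro y x
    rw [hξ y]
    by_cases h : y⁻¹ * x ∈ L
    · rw [Set.indicator_of_mem, if_pos h]
      rw [Set.mem_smul_set_iff_inv_smul_mem]
      simpa [smul_eq_mul] using h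
    · rw [Set.indicator_of_notMem, if_neg h]
      intro hc
      exact h (by simpa [smul_eq_mul] using Set.mem_smul_set_iff_inv_smul_mem.1 hc)
  have hηx : ∀ y x : G, ((lam s (ξ y) : lp (fun _ : G => ℂ) 2) : ∀ _ : G, ℂ) x
      = if (s * y)⁻¹ * x ∈ L then (φ (s⁻¹ * x) : ℂ) else 0 := by
    intro y x
    rw [hlam s (ξ y) x, hξx]
    simp [mul_inv_rev, mul_assoc]
  -- norms and inner products in lp 2
  have hexp : ∀ r : ℝ, r ^ ((2 : ENNReal)).toReal = r ^ (2 : ℕ) := by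
    intro r
    rw [ENNReal.toReal_ofNat, show ((2:ℝ)) = ((2:ℕ):ℝ) by norm_num, Real.rpow_natCast]
  have hsumm : ∀ f : lp (fun _ : G => ℂ) 2, Summable (fun x => ‖(f : ∀ _ : G, ℂ) x‖ ^ 2) := by
    intro f
    have h := (memℓp_gen_iff (p := 2) (by norm_num)).1 (lp.memℓp f)
    simpa [hexp] using h
  have hnormsq : ∀ f : lp (fun _ : G => ℂ) 2, ‖f‖ ^ 2 = ∑' x, ‖(f : ∀ _ : G, ℂ) x‖ ^ 2 := by
    intro f
    have h := lp.norm_rpow_eq_tsum (p := 2) (by norm_num) f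
    simpa [hexp] using h
  have hinner : ∀ f g : lp (fun _ : G => ℂ) 2,
      ⟪f, g⟫_ℂ = ∑' x, conj ((f : ∀ _ : G, ℂ) x) * (g : ∀ _ : G, ℂ) x := by
    intro f g
    rw [lp.inner_eq_tsum]
    simp [RCLike.inner_apply]
    exact tsum_congr fun x => mul_comm _ _
  -- lam s preserves inner products and norms
  have hlaminv : ∀ a b : lp (fun _ : G => ℂ) 2, ⟪lam s a, lam s b⟫_ℂ = ⟪a, b⟫_ℂ := by
    intro a b
    rw [hinner, hinner]
    have h1 : ∀ x : G, conj ((lam s a : ∀ _ : G, ℂ) x) * (lam s b : ∀ _ : G, ℂ) x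
        = conj ((a : ∀ _ : G, ℂ) (s⁻¹ * x)) * (b : ∀ _ : G, ℂ) (s⁻¹ * x) := fun x => by
      rw [hlam, hlam]
    rw [tsum_congr h1]
    exact (Equiv.mulLeft s⁻¹).tsum_eq fun z => conj ((a : ∀ _ : G, ℂ) z) * (b : ∀ _ : G, ℂ) z
  have hlamnorm : ∀ a : lp (fun _ : G => ℂ) 2, ‖lam s a‖ = ‖a‖ := by
    intro a
    have h1 : ‖lam s a‖ ^ 2 = ‖a‖ ^ 2 := by
      rw [hnormsq, hnormsq]
      have h1 : ∀ x : G, ‖(lam s a : ∀ _ : G, ℂ) x‖ ^ 2 = ‖(a : ∀ _ : G, ℂ) (s⁻¹ * x)‖ ^ 2 :=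
        fun x => by rw [hlam]
      rw [tsum_congr h1]
      exact (Equiv.mulLeft s⁻¹).tsum_eq fun z => ‖(a : ∀ _ : G, ℂ) z‖ ^ 2
    nlinarith [norm_nonneg (lam s a), norm_nonneg a]
  -- the key counting facts
  have hsing : ∀ c a : G,
      (fun x : G => if c⁻¹ * x ∈ L then (if a * x ∈ K then (1:ℝ) else 0) else 0)
      = fun x => if x = a⁻¹ * rep (a * c) then (1:ℝ) else 0 := by
    intro c a
    funext x
    by_cases hx : x = a⁻¹ * rep (a * c)
    · subst hx
      have h1 : c⁻¹ * (a⁻¹ * rep (a * c)) ∈ L := by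
        have h := hrepL (a * c)
        rwa [mul_inv_rev, mul_assoc] at h
      have h2 : a * (a⁻¹ * rep (a * c)) ∈ K := by
        simpa [mul_inv_cancel_left] using hrepK (a * c)
      simp [h1, h2, hrepK]
    · by_cases h1 : c⁻¹ * x ∈ L
      · by_cases h2 : a * x ∈ K
        · exfalso
          apply hx
          have h3 : (a * c)⁻¹ * (a * x) ∈ L := by
            have e : (a * c)⁻¹ * (a * x) = c⁻¹ * x := by group
            rw [e]; exact h1
          have h4 := hrepU (a * c) (a * x) h2 h3
          rw [← h4]
          simp
        · simp [h1, h2, hx]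
      · simp [h1, hx]
  have hkeyHS : ∀ (c : G) (A : Finset G),
      HasSum (fun x : G => if c⁻¹ * x ∈ L then (∑ a ∈ A, if a * x ∈ K then (1:ℝ) else 0) else 0)
        (A.card : ℝ) := by
    intro c A
    have hfun : (fun x : G => if c⁻¹ * x ∈ L then (∑ a ∈ A, if a * x ∈ K then (1:ℝ) else 0) else 0)
        = fun x => ∑ a ∈ A, (if c⁻¹ * x ∈ L then (if a * x ∈ K then (1:ℝ) else 0) else 0) := by
      funext x; by_cases h : c⁻¹ * x ∈ L <;> simp [h]
    rw [hfun, show ((A.card : ℝ)) = ∑ _a ∈ A, (1:ℝ) by simp]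
    refine hasSum_sum fun a _ => ?_
    rw [hsing c a]
    exact hasSum_ite_eq _ 1
  have hcard : ∀ (A : Finset G) (x : G),
      ((K ∩ A.image (· * x)).card : ℝ) = ∑ a ∈ A, (if a * x ∈ K then (1:ℝ) else 0) := by
    intro A x
    have h1 : K ∩ A.image (· * x) = (A.filter fun a => a * x ∈ K).image (· * x) := by
      ext b
      simp only [Finset.mem_inter, Finset.mem_image, Finset.mem_filter]
      constructor
      · rintro ⟨hbK, a, ha, rfl⟩
        exact ⟨a, ⟨ha, hbK⟩, rfl⟩
      · rintro ⟨a, ⟨ha, haK⟩, rfl⟩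
        exact ⟨haK, a, ha, rfl⟩
    rw [h1, Finset.card_image_of_injective _ (mul_left_injective x), Finset.card_filter]
    push_cast
    exact Finset.sum_congr rfl fun a _ => by split <;> simp
  have hF0 : (0:ℝ) < (F.card : ℝ) := by exact_mod_cast Finset.card_pos.2 hFne
  have hφ0 : ∀ x, 0 ≤ φ x := fun x => by rw [hφ]; exact Real.sqrt_nonneg _
  have hφsq : ∀ x : G, φ x ^ 2 = (∑ f ∈ F, if f * x ∈ K then (1:ℝ) else 0) / (F.card : ℝ) := by
    intro x
    rw [hφ, Real.sq_sqrt (div_nonneg (Nat.cast_nonneg _) (Nat.cast_nonneg _)), hcard]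
  -- norm of ξ y is 1
  have hξnormsq : ∀ y : G, ‖ξ y‖ ^ 2 = 1 := by
    intro y
    rw [hnormsq]
    have hcomp : (fun x => ‖(ξ y : ∀ _ : G, ℂ) x‖ ^ 2)
        = fun x => (1 / (F.card : ℝ)) *
          (if y⁻¹ * x ∈ L then (∑ f ∈ F, if f * x ∈ K then (1:ℝ) else 0) else 0) := by
      funext x
      rw [hξx]
      by_cases h : y⁻¹ * x ∈ L
      · rw [if_pos h, if_pos h, Complex.norm_real, Real.norm_eq_abs, sq_abs, hφsq]
        ring
      · rw [if_neg h, if_neg h]; simp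
    rw [hcomp, tsum_mul_left, (hkeyHS y F).tsum_eq]
    rw [one_div, inv_mul_cancel₀ (ne_of_gt hF0)]
  have hξnorm : ∀ y : G, ‖ξ y‖ = 1 := fun y => by nlinarith [hξnormsq y, norm_nonneg (ξ y)]
  -- the symmetric differences
  set A : Finset G := symmDiff F (F.image (· * s)) with hA
  set A₁ : Finset G := symmDiff (F.image (· * s⁻¹)) F with hA₁
  have hA₁card : (A₁.card : ℝ) = (A.card : ℝ) := by
    have h2 : (F.image (· * s⁻¹)).image (· * s) = F := by
      rw [Finset.image_image]
      have h3 : ((· * s) ∘ (· * s⁻¹)) = (id : G → G) := by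
        funext z; simp
      rw [h3, Finset.image_id]
    have himg : A₁.image (· * s) = A := by
      rw [hA₁, hA, Finset.image_symmDiff _ _ (mul_left_injective s), h2]
    rw [← himg, Finset.card_image_of_injective _ (mul_left_injective s)]
  set ε : ℝ := Real.sqrt ((A.card : ℝ) / (F.card : ℝ)) with hε
  have hε0 : 0 ≤ ε := Real.sqrt_nonneg _
  have hεsq : ε ^ 2 = (A.card : ℝ) / (F.card : ℝ) :=
    Real.sq_sqrt (div_nonneg (Nat.cast_nonneg _) (Nat.cast_nonneg _))
  -- coset membership transfer for representative
  have hiffL : ∀ y x : G, ((rep (s * y))⁻¹ * x ∈ L ↔ (s * y)⁻¹ * x ∈ L) := by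
    intro y x
    have hm := hrepL (s * y)
    constructor
    · intro h
      have e : (s * y)⁻¹ * x = ((s * y)⁻¹ * rep (s * y)) * ((rep (s * y))⁻¹ * x) := by group
      rw [e]; exact mul_mem hm h
    · intro h
      have e : (rep (s * y))⁻¹ * x = ((s * y)⁻¹ * rep (s * y))⁻¹ * ((s * y)⁻¹ * x) := by group
      rw [e]; exact mul_mem (inv_mem hm) h
  -- pointwise formula for the difference vector
  have hdx : ∀ y x : G, ((lam s (ξ y) - ξ (rep (s * y)) : lp (fun _ : G => ℂ) 2) : ∀ _ : G, ℂ) x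
      = if (s * y)⁻¹ * x ∈ L then ((φ (s⁻¹ * x) - φ x : ℝ) : ℂ) else 0 := by
    intro y x
    rw [lp.coeFn_sub, Pi.sub_apply, hηx, hξx]
    by_cases h : (s * y)⁻¹ * x ∈ L
    · rw [if_pos h, if_pos ((hiffL y x).2 h), if_pos h]
      push_cast; ring
    · rw [if_neg h, if_neg (fun hc => h ((hiffL y x).1 hc)), if_neg h]
      simp
  -- the crucial estimate on the difference vectors
  have hdle : ∀ y : G, ‖lam s (ξ y) - ξ (rep (s * y))‖ ≤ ε := by
    intro y
    have hsq : ‖lam s (ξ y) - ξ (rep (s * y))‖ ^ 2 ≤ (A.card : ℝ) / (F.card : ℝ) := by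
      rw [hnormsq]
      have hle : ∀ x : G,
          ‖((lam s (ξ y) - ξ (rep (s * y)) : lp (fun _ : G => ℂ) 2) : ∀ _ : G, ℂ) x‖ ^ 2
          ≤ (1 / (F.card : ℝ)) *
            (if (s * y)⁻¹ * x ∈ L then (∑ a ∈ A₁, if a * x ∈ K then (1:ℝ) else 0) else 0) := by
        intro x
        rw [hdx]
        by_cases h : (s * y)⁻¹ * x ∈ L
        · rw [if_pos h, if_pos h, Complex.norm_real, Real.norm_eq_abs, sq_abs]
          have e1 : F.image (· * (s⁻¹ * x)) = (F.image (· * s⁻¹)).image (· * x) := by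
            rw [Finset.image_image]
            congr 1
            funext z
            simp [Function.comp, mul_assoc]
          have e2 : φ (s⁻¹ * x) = Real.sqrt
              (((K ∩ (F.image (· * s⁻¹)).image (· * x)).card : ℝ) / (F.card : ℝ)) := by
            rw [hφ, e1]
          have e3 : symmDiff ((F.image (· * s⁻¹)).image (· * x)) (F.image (· * x))
              = A₁.image (· * x) := by
            rw [hA₁, Finset.image_symmDiff _ _ (mul_left_injective x)]
          calc (φ (s⁻¹ * x) - φ x) ^ 2
              ≤ |((K ∩ (F.image (· * s⁻¹)).image (· * x)).card : ℝ) / (F.card : ℝ)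
                 - ((K ∩ F.image (· * x)).card : ℝ) / (F.card : ℝ)| := by
                rw [e2, hφ]
                exact aux_sqrt_sub_sq (div_nonneg (Nat.cast_nonneg _) (Nat.cast_nonneg _))
                  (div_nonneg (Nat.cast_nonneg _) (Nat.cast_nonneg _))
            _ = |((K ∩ (F.image (· * s⁻¹)).image (· * x)).card : ℝ)
                 - ((K ∩ F.image (· * x)).card : ℝ)| / (F.card : ℝ) := by
                rw [div_sub_div_same, abs_div, abs_of_pos hF0]
            _ ≤ ((K ∩ A₁.image (· * x)).card : ℝ) / (F.card : ℝ) := by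
                rw [div_le_div_iff_of_pos_right hF0]
                have h4 := aux_card_symmDiff K ((F.image (· * s⁻¹)).image (· * x))
                  (F.image (· * x))
                rwa [e3] at h4
            _ = (1 / (F.card : ℝ)) * (∑ a ∈ A₁, if a * x ∈ K then (1:ℝ) else 0) := by
                rw [hcard]; ring
        · rw [if_neg h, if_neg h]
          simp
      refine (Summable.tsum_le_tsum hle (by
          have := hsumm (lam s (ξ y) - ξ (rep (s * y)))
          exact this) (((hkeyHS (s * y) A₁).summable).mul_left _)).trans ?_
      rw [tsum_mul_left, (hkeyHS (s * y) A₁).tsum_eq, hA₁card]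
      rw [one_div, inv_mul_eq_div]
    nlinarith [norm_nonneg (lam s (ξ y) - ξ (rep (s * y))), hε0, hεsq]
  -- reduce to a bound on each vector
  refine ContinuousLinearMap.opNorm_le_bound _ (mul_nonneg (by norm_num) hε0) fun v => ?_
  obtain ⟨w, hw⟩ : ∃ w : lp (fun _ : G => ℂ) 2, w = lam s v := ⟨_, rfl⟩
  have hwv : ‖w‖ = ‖v‖ := by rw [hw]; exact hlamnorm v
  obtain ⟨t, ht⟩ : ∃ t : G → lp (fun _ : G => ℂ) 2, ∀ y, t y =
      ⟪lam s (ξ y), w⟫_ℂ • lam s (ξ y) - ⟪ξ (rep (s * y)), w⟫_ℂ • ξ (rep (s * y)) :=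
    ⟨_, fun y => rfl⟩
  have hli : ∀ a ∈ K, rep (s * rep (s⁻¹ * a)) = a := by
    intro a ha
    refine (hrepU _ a ha ?_).symm
    have h := hrepL (s⁻¹ * a)
    have e : (s * rep (s⁻¹ * a))⁻¹ * a = ((s⁻¹ * a)⁻¹ * rep (s⁻¹ * a))⁻¹ := by group
    rw [e]; exact inv_mem h
  have hri : ∀ a ∈ K, rep (s⁻¹ * rep (s * a)) = a := by
    intro a ha
    refine (hrepU _ a ha ?_).symm
    have h := hrepL (s * a)
    have e : (s⁻¹ * rep (s * a))⁻¹ * a = ((s * a)⁻¹ * rep (s * a))⁻¹ := by group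
    rw [e]; exact inv_mem h
  have hDv : (lam s * P - P * lam s) v = ∑ y ∈ K, t y := by
    rw [ContinuousLinearMap.sub_apply, ContinuousLinearMap.mul_apply,
      ContinuousLinearMap.mul_apply, ← hw, hP v, hP w, map_sum]
    have h1 : ∀ y ∈ K, lam s (⟪ξ y, v⟫_ℂ • ξ y) = ⟪lam s (ξ y), w⟫_ℂ • lam s (ξ y) := by
      intro y _
      rw [map_smul]
      congr 1
      rw [hw]
      exact (hlaminv (ξ y) v).symm
    have h2 : (∑ y ∈ K, ⟪ξ y, w⟫_ℂ • ξ y)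
        = ∑ y ∈ K, ⟪ξ (rep (s * y)), w⟫_ℂ • ξ (rep (s * y)) := by
      refine Finset.sum_nbij' (fun k => rep (s⁻¹ * k)) (fun y => rep (s * y))
        (fun a _ => hrepK _) (fun a _ => hrepK _) hli hri ?_
      intro a ha
      rw [hli a ha]
    rw [Finset.sum_congr rfl h1, h2, ← Finset.sum_sub_distrib]
    exact Finset.sum_congr rfl fun y _ => (ht y).symm
  -- restriction of w to the coset (s y) L
  have hWmem : ∀ y : G,
      Memℓp (fun x : G => if (s * y)⁻¹ * x ∈ L then (w : ∀ _ : G, ℂ) x else 0) 2 := by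
    intro y
    apply memℓp_gen
    have hb : Summable (fun x : G =>
        ‖(if (s * y)⁻¹ * x ∈ L then (w : ∀ _ : G, ℂ) x else 0)‖ ^ (2:ℕ)) := by
      refine Summable.of_nonneg_of_le (fun x => sq_nonneg _) (fun x => ?_) (hsumm w)
      split
      · exact le_rfl
      · simp [norm_nonneg]
    simpa [hexp] using hb
  obtain ⟨W, hWx⟩ : ∃ W : G → lp (fun _ : G => ℂ) 2, ∀ y x, (W y : ∀ _ : G, ℂ) x
      = if (s * y)⁻¹ * x ∈ L then (w : ∀ _ : G, ℂ) x else 0 :=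
    ⟨fun y => ⟨fun x => if (s * y)⁻¹ * x ∈ L then (w : ∀ _ : G, ℂ) x else 0, hWmem y⟩,
      fun y x => rfl⟩
  have hinnerW : ∀ (y : G) (a : lp (fun _ : G => ℂ) 2),
      (∀ x, (s * y)⁻¹ * x ∉ L → (a : ∀ _ : G, ℂ) x = 0) → ⟪a, w⟫_ℂ = ⟪a, W y⟫_ℂ := by
    intro y a ha
    rw [hinner, hinner]
    refine tsum_congr fun x => ?_
    rw [hWx]
    by_cases h : (s * y)⁻¹ * x ∈ L
    · rw [if_pos h]
    · rw [if_neg h, ha x h]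
      simp
  have hWnormsq : ∀ y, ‖W y‖ ^ 2
      = ∑' x, (if (s * y)⁻¹ * x ∈ L then ‖(w : ∀ _ : G, ℂ) x‖ ^ 2 else 0) := by
    intro y
    rw [hnormsq]
    refine tsum_congr fun x => ?_
    rw [hWx]
    by_cases h : (s * y)⁻¹ * x ∈ L
    · rw [if_pos h, if_pos h]
    · rw [if_neg h, if_neg h]
      simp
  have hWsummand : ∀ y : G,
      Summable (fun x : G => if (s * y)⁻¹ * x ∈ L then ‖(w : ∀ _ : G, ℂ) x‖ ^ 2 else 0) := by
    intro y
    refine Summable.of_nonneg_of_le (fun x => ?_) (fun x => ?_) (hsumm w)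
    · split
      · exact sq_nonneg _
      · exact le_rfl
    · split
      · exact le_rfl
      · exact sq_nonneg _
  have hWsum : ∑ y ∈ K, ‖W y‖ ^ 2 ≤ ‖w‖ ^ 2 := by
    rw [Finset.sum_congr rfl fun y (_ : y ∈ K) => hWnormsq y]
    rw [← Summable.tsum_finsetSum (fun y _ => hWsummand y)]
    refine (Summable.tsum_le_tsum (fun x => ?_) (summable_sum fun y _ => hWsummand y)
      (hsumm w)).trans_eq (hnormsq w).symm
    have hsingle : ∀ y ∈ K, y ≠ rep (s⁻¹ * x) →
        (if (s * y)⁻¹ * x ∈ L then ‖(w : ∀ _ : G, ℂ) x‖ ^ 2 else 0) = 0 := by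
      intro y hy hne
      rw [if_neg]
      intro hmem
      apply hne
      apply hrepU _ _ hy
      have h2 := inv_mem hmem
      rwa [show ((s * y)⁻¹ * x)⁻¹ = (s⁻¹ * x)⁻¹ * y by group] at h2
    rw [Finset.sum_eq_single_of_mem (rep (s⁻¹ * x)) (hrepK _) hsingle]
    split
    · exact le_rfl
    · exact sq_nonneg _
  -- per-term norm bound
  have hη1 : ∀ y : G, ‖lam s (ξ y)‖ = 1 := fun y => by rw [hlamnorm]; exact hξnorm y
  have htle : ∀ y ∈ K, ‖t y‖ ≤ 2 * ε * ‖W y‖ := by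
    intro y _
    have hδ0 : ∀ x, (s * y)⁻¹ * x ∉ L →
        ((lam s (ξ y) - ξ (rep (s * y)) : lp (fun _ : G => ℂ) 2) : ∀ _ : G, ℂ) x = 0 := by
      intro x hx; rw [hdx y x, if_neg hx]
    have hξ'0 : ∀ x, (s * y)⁻¹ * x ∉ L → (ξ (rep (s * y)) : ∀ _ : G, ℂ) x = 0 := by
      intro x hx
      rw [hξx, if_neg (fun hc => hx ((hiffL y x).1 hc))]
    have hid : t y = ⟪lam s (ξ y) - ξ (rep (s * y)), w⟫_ℂ • lam s (ξ y)
        + ⟪ξ (rep (s * y)), w⟫_ℂ • (lam s (ξ y) - ξ (rep (s * y))) := by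
      rw [ht y, inner_sub_left]
      module
    rw [hid, hinnerW y _ hδ0, hinnerW y _ hξ'0]
    refine (norm_add_le _ _).trans ?_
    rw [norm_smul, norm_smul, hη1 y]
    have hc1 : ‖⟪lam s (ξ y) - ξ (rep (s * y)), W y⟫_ℂ‖ ≤ ε * ‖W y‖ :=
      (norm_inner_le_norm _ _).trans
        (mul_le_mul_of_nonneg_right (hdle y) (norm_nonneg _))
    have hc2 : ‖⟪ξ (rep (s * y)), W y⟫_ℂ‖ ≤ ‖W y‖ := by
      refine (norm_inner_le_norm _ _).trans ?_
      rw [hξnorm, one_mul]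
    have hc3 : ‖lam s (ξ y) - ξ (rep (s * y))‖ ≤ ε := hdle y
    nlinarith [norm_nonneg (W y), norm_nonneg (lam s (ξ y) - ξ (rep (s * y))),
      norm_nonneg (⟪ξ (rep (s * y)), W y⟫_ℂ : ℂ), hε0]
  -- supports of the t y are pairwise disjoint
  have ht0 : ∀ y x : G, (s * y)⁻¹ * x ∉ L → ((t y : lp (fun _ : G => ℂ) 2) : ∀ _ : G, ℂ) x = 0 := by
    intro y x hx
    have e1 : ((lam s (ξ y) : lp (fun _ : G => ℂ) 2) : ∀ _ : G, ℂ) x = 0 := by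
      rw [hηx, if_neg hx]
    have e2 : (ξ (rep (s * y)) : ∀ _ : G, ℂ) x = 0 := by
      rw [hξx, if_neg (fun hc => hx ((hiffL y x).1 hc))]
    simp only [ht, lp.coeFn_sub, lp.coeFn_smul, Pi.sub_apply, Pi.smul_apply, e1, e2,
      smul_zero, sub_zero]
  have horth : ∀ y ∈ K, ∀ y' ∈ K, y ≠ y' → ⟪t y, t y'⟫_ℂ = 0 := by
    intro y hy y' hy' hne
    rw [hinner]
    have hz : ∀ x : G, conj (((t y : lp (fun _ : G => ℂ) 2) : ∀ _ : G, ℂ) x)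
        * (((t y' : lp (fun _ : G => ℂ) 2) : ∀ _ : G, ℂ) x) = 0 := by
      intro x
      by_cases h1 : (s * y)⁻¹ * x ∈ L
      · have h2 : (s * y')⁻¹ * x ∉ L := by
          intro h2
          apply hne
          have e1 : y = rep (s⁻¹ * x) := by
            apply hrepU _ _ hy
            have h3 := inv_mem h1
            rwa [show ((s * y)⁻¹ * x)⁻¹ = (s⁻¹ * x)⁻¹ * y by group] at h3
          have e2 : y' = rep (s⁻¹ * x) := by
            apply hrepU _ _ hy'
            have h3 := inv_mem h2
            rwa [show ((s * y')⁻¹ * x)⁻¹ = (s⁻¹ * x)⁻¹ * y' by group] at h3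
          rw [e1, e2]
        rw [ht0 y' x h2, mul_zero]
      · rw [ht0 y x h1, map_zero, zero_mul]
    rw [tsum_congr hz]
    exact tsum_zero
  -- put everything together
  have hsumsq : ‖∑ y ∈ K, t y‖ ^ 2 ≤ (2 * ε) ^ 2 * ‖w‖ ^ 2 := by
    rw [aux_norm_sum_sq K t horth]
    have hstep : ∀ y ∈ K, ‖t y‖ ^ 2 ≤ (2 * ε) ^ 2 * ‖W y‖ ^ 2 := by
      intro y hy
      have h := htle y hy
      nlinarith [norm_nonneg (t y), norm_nonneg (W y), hε0]
    calc ∑ y ∈ K, ‖t y‖ ^ 2 ≤ ∑ y ∈ K, (2 * ε) ^ 2 * ‖W y‖ ^ 2 := Finset.sum_le_sum hstep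
      _ = (2 * ε) ^ 2 * ∑ y ∈ K, ‖W y‖ ^ 2 := by rw [Finset.mul_sum]
      _ ≤ (2 * ε) ^ 2 * ‖w‖ ^ 2 := mul_le_mul_of_nonneg_left hWsum (sq_nonneg _)
  rw [hDv]
  have h1 : ‖∑ y ∈ K, t y‖ ^ 2 ≤ (2 * ε * ‖v‖) ^ 2 := by
    rw [← hwv]
    nlinarith [hsumsq]
  nlinarith [norm_nonneg (∑ y ∈ K, t y), hε0, norm_nonneg v,
    mul_nonneg (mul_nonneg (by norm_num : (0:ℝ) ≤ 2) hε0) (norm_nonneg v)]
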